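/- arXiv:1511.02969 — 4 statements merged into one kernel-verified Lean document; each statement's English description precedes it below -/
import Mathlib

section
/- Let O be the origin in ℝ³ and let r be a line in ℝ³ not passing through O, with direction vector d (|d| = 1). Then the set of vanishing points of r on the unit sphere, defined as cl({P/‖P‖ : P ∈ r}) \ {P/‖P‖ : P ∈ r}, is exactly {d, -d}. -/
open scoped RealInnerProductSpace

noncomputable section

abbrev E3 := EuclideanSpace ℝ (Fin 3)
abbrev E2 := EuclideanSpace ℝ (Fin 2)

/-- The vector (a, b) in euclidean ℝ². -/
def vec2 (a b : ℝ) : E2 := (WithLp.equiv 2 (Fin 2 → ℝ)).symm ![a, b]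

/-- The vector (a, b, c) in euclidean ℝ³. -/
def vec3 (a b c : ℝ) : E3 := (WithLp.equiv 2 (Fin 3 → ℝ)).symm ![a, b, c]

/-- Conic projection (anamorphism) onto the unit sphere centered at the origin. -/
def proj (P : E3) : E3 := ‖P‖⁻¹ • P

/-- The line through A with direction d. -/
def lineSet (A d : E3) : Set E3 := {P | ∃ t : ℝ, P = A + t • d}

/-!
The projected line `t ↦ proj (A + t • d)` is a continuous curve tending to `d` at `+∞` and
to `-d` at `-∞`. Any ultrafilter on the parameter line either contains a compact set, so
the curve converges along it to a point of the curve, or lies below `atTop ⊔ atBot`, so the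
curve converges along it to `d` or `-d`; hence the closure of the curve adds at most `±d`.
Neither is on the curve: `proj P = ±d` forces `P ∈ ℝ d`, and the line misses `ℝ d` since
it misses `O`.
-/

open Filter Topology Set

section CurveClosure

variable {α X : Type*} [LinearOrder α] [TopologicalSpace α] [OrderClosedTopology α]
  [CompactIccSpace α] [NoMaxOrder α] [NoMinOrder α] [TopologicalSpace X] [T2Space X]
  {f : α → X} {a b : X}

theorem closure_range_subset_of_tendsto_atTop_atBot (hf : Continuous f)
    (ha : Tendsto f atTop (𝓝 a)) (hb : Tendsto f atBot (𝓝 b)) :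
    closure (range f) ⊆ insert a (insert b (range f)) := by
  intro x hx
  rw [mem_closure_iff_clusterPt, ← map_top] at hx
  obtain ⟨U, -, hUx⟩ := mapClusterPt_iff_ultrafilter.1 hx
  by_cases hU : (U : Filter α) ≤ cocompact α
  · rw [cocompact_eq_atBot_atTop, Ultrafilter.le_sup_iff] at hU
    rcases hU with hU | hU
    · exact .inr <| .inl <| tendsto_nhds_unique hUx (hb.mono_left hU)
    · exact .inl <| tendsto_nhds_unique hUx (ha.mono_left hU)
  · obtain ⟨K, hKU, hK⟩ :=
      (disjoint_cocompact_right (U : Filter α)).1 (Ultrafilter.disjoint_iff_not_le.2 hU)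
    obtain ⟨t, -, hUt⟩ := hK.ultrafilter_le_nhds U (le_principal_iff.2 hKU)
    exact .inr <| .inr ⟨t, tendsto_nhds_unique ((hf.tendsto t).mono_left hUt) hUx⟩

theorem closure_range_diff_range_of_tendsto_atTop_atBot [Nonempty α] (hf : Continuous f)
    (ha : Tendsto f atTop (𝓝 a)) (hb : Tendsto f atBot (𝓝 b)) (ha' : a ∉ range f)
    (hb' : b ∉ range f) :
    closure (range f) \ range f = {a, b} := by
  refine Subset.antisymm (fun x ⟨hx, hxf⟩ => ?_) (insert_subset_iff.2 ⟨?_, ?_⟩)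
  · rcases closure_range_subset_of_tendsto_atTop_atBot hf ha hb hx with h | h | h
    exacts [.inl h, .inr h, absurd h hxf]
  · exact ⟨mem_closure_of_tendsto ha (.of_forall mem_range_self), ha'⟩
  · exact singleton_subset_iff.2 ⟨mem_closure_of_tendsto hb (.of_forall mem_range_self), hb'⟩

end CurveClosure

theorem proj_smul_of_pos {c : ℝ} (hc : 0 < c) (P : E3) : proj (c • P) = proj P := by
  rw [proj, proj, norm_smul, Real.norm_of_nonneg hc.le, smul_smul, mul_inv_rev, mul_assoc,
    inv_mul_cancel₀ hc.ne', mul_one]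

theorem proj_of_norm_eq_one {d : E3} (hd : ‖d‖ = 1) : proj d = d := by
  rw [proj, hd, inv_one, one_smul]

theorem norm_smul_proj (P : E3) : ‖P‖ • proj P = P := by
  rcases eq_or_ne P 0 with rfl | hP
  · simp
  · rw [proj, smul_smul, mul_inv_cancel₀ (norm_ne_zero_iff.2 hP), one_smul]

theorem continuousAt_proj {P : E3} (hP : P ≠ 0) : ContinuousAt proj P :=
  (continuous_norm.continuousAt.inv₀ (norm_ne_zero_iff.2 hP)).smul continuousAt_id

theorem lineSet_eq_range (A d : E3) : lineSet A d = range fun t : ℝ => A + t • d := by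
  ext P
  simp [lineSet, eq_comm]

section ProjectedLine

variable {A d : E3}

theorem continuous_proj_line (hO : ∀ t : ℝ, A + t • d ≠ 0) :
    Continuous fun t : ℝ => proj (A + t • d) :=
  continuous_iff_continuousAt.2 fun t =>
    (continuousAt_proj (hO t)).comp (f := fun s : ℝ => A + s • d) (by fun_prop)

theorem tendsto_proj_line_atTop (A : E3) (hd : d ≠ 0) :
    Tendsto (fun t : ℝ => proj (A + t • d)) atTop (𝓝 (proj d)) := by
  have hlim : Tendsto (fun t : ℝ => t⁻¹ • A + d) atTop (𝓝 d) := by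
    simpa using ((tendsto_inv_atTop_zero (𝕜 := ℝ)).smul_const A).add_const d
  refine ((continuousAt_proj hd).tendsto.comp hlim).congr' ?_
  filter_upwards [eventually_gt_atTop 0] with t ht
  rw [Function.comp_apply, ← proj_smul_of_pos ht, smul_add, smul_smul,
    mul_inv_cancel₀ ht.ne', one_smul]

theorem tendsto_proj_line_atBot (A : E3) (hd : d ≠ 0) :
    Tendsto (fun t : ℝ => proj (A + t • d)) atBot (𝓝 (proj (-d))) := by
  refine ((tendsto_proj_line_atTop A (neg_ne_zero.2 hd)).comp tendsto_neg_atBot_atTop).congr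
    fun t => ?_
  simp only [Function.comp_apply, neg_smul_neg]

theorem proj_line_ne_proj (hO : ∀ t : ℝ, A + t • d ≠ 0) (t : ℝ) :
    proj (A + t • d) ≠ proj d := by
  intro h
  set c := ‖A + t • d‖ * ‖d‖⁻¹
  have hP : A + t • d = c • d := by
    rw [← norm_smul_proj (A + t • d), h, proj, smul_smul]
  apply hO (t - c)
  rw [sub_smul, ← add_sub_assoc, hP, sub_self]

theorem proj_line_ne_proj_neg (hO : ∀ t : ℝ, A + t • d ≠ 0) (t : ℝ) :
    proj (A + t • d) ≠ proj (-d) := by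
  simpa using proj_line_ne_proj (A := A) (d := -d) (fun s => by simpa using hO (-s)) (-t)

end ProjectedLine

/-- the vanishing set of a line not through the origin, with unit direction d,
is exactly {d, -d}. -/
theorem stmt0 (A d : E3) (hd : ‖d‖ = 1) (hO : ∀ t : ℝ, A + t • d ≠ 0) :
    closure (proj '' lineSet A d) \ proj '' lineSet A d = {d, -d} := by
  have hd0 : d ≠ 0 := norm_ne_zero_iff.1 (hd ▸ one_ne_zero)
  rw [lineSet_eq_range, ← range_comp]
  have h := closure_range_diff_range_of_tendsto_atTop_atBot (continuous_proj_line hO)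
    (tendsto_proj_line_atTop A hd0) (tendsto_proj_line_atBot A hd0)
    (fun ⟨t, ht⟩ => proj_line_ne_proj hO t ht) (fun ⟨t, ht⟩ => proj_line_ne_proj_neg hO t ht)
  rwa [proj_of_norm_eq_one hd, proj_of_norm_eq_one (by rwa [norm_neg])] at h
end
end

section
/- Let H be a plane in ℝ³ not passing through the origin O. Then the vanishing set of H on the unit sphere, cl({P/‖P‖ : P ∈ H}) \ {P/‖P‖ : P ∈ H}, equals the great circle S² ∩ H₀, where H₀ is the plane through O parallel to H. -/
/-!
Normalization maps a point `P` with `⟪n, P⟫ = c` to a unit vector `Q` with `c ⟪n, Q⟫ > 0`, and every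
such `Q` is hit by rescaling it onto the plane; so the image of the plane is an open hemisphere. Its
closure is the closed hemisphere, since a point of the boundary circle is the limit of the
normalizations of `Q + t • c • n` as `t → 0⁺`. Removing the open hemisphere leaves the great circle.
-/

open scoped RealInnerProductSpace

noncomputable section

open Metric Filter Topology
open NormedSpace (normalize_smul_of_pos normalize_eq_self_of_norm_eq_one norm_normalize)

section Hemisphere

variable {V : Type*} [NormedAddCommGroup V] [InnerProductSpace ℝ V]

lemma continuousAt_normalize {x : V} (hx : x ≠ 0) : ContinuousAt NormedSpace.normalize x :=
  (continuousAt_id.norm.inv₀ (norm_ne_zero_iff.2 hx)).smul continuousAt_id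

lemma inner_normalize_pos_iff {m x : V} : 0 < ⟪m, NormedSpace.normalize x⟫ ↔ 0 < ⟪m, x⟫ := by
  rcases eq_or_ne x 0 with rfl | hx
  · simp
  · rw [NormedSpace.normalize, real_inner_smul_right]
    exact mul_pos_iff_of_pos_left (inv_pos.2 (norm_pos_iff.2 hx))

lemma normalize_image_setOf_inner_eq {n : V} {c : ℝ} (hc : c ≠ 0) :
    NormedSpace.normalize '' {P : V | ⟪n, P⟫ = c} = sphere 0 1 ∩ {Q | 0 < ⟪c • n, Q⟫} := by
  ext Q
  simp only [Set.mem_image, Set.mem_inter_iff, Set.mem_ofPred_eq, mem_sphere_zero_iff_norm]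
  constructor
  · rintro ⟨P, hP, rfl⟩
    have hP0 : P ≠ 0 := by rintro rfl; exact hc (by simpa using hP.symm)
    refine ⟨norm_normalize hP0, inner_normalize_pos_iff.2 ?_⟩
    rw [real_inner_smul_left, hP]
    exact mul_self_pos.2 hc
  · rintro ⟨hQ, hpos⟩
    rw [real_inner_smul_left] at hpos
    have hnQ : ⟪n, Q⟫ ≠ 0 := right_ne_zero_of_mul hpos.ne'
    have ht : 0 < c / ⟪n, Q⟫ := div_pos_iff.2 (mul_pos_iff.1 hpos)
    refine ⟨(c / ⟪n, Q⟫) • Q, ?_, ?_⟩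
    · rw [real_inner_smul_right, div_mul_cancel₀ c hnQ]
    · rw [normalize_smul_of_pos ht, normalize_eq_self_of_norm_eq_one hQ]

lemma closure_sphere_inter_setOf_inner_pos {m : V} (hm : m ≠ 0) :
    closure (sphere 0 1 ∩ {Q | 0 < ⟪m, Q⟫}) = sphere 0 1 ∩ {Q | 0 ≤ ⟪m, Q⟫} := by
  apply subset_antisymm
  · refine closure_minimal (Set.inter_subset_inter_right _ fun Q (hQ : 0 < ⟪m, Q⟫) => hQ.le) ?_
    exact isClosed_sphere.inter (isClosed_le continuous_const (continuous_const.inner continuous_id))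
  · rintro Q ⟨hQ, hmQ⟩
    rw [mem_sphere_zero_iff_norm] at hQ
    have hQ0 : Q ≠ 0 := norm_ne_zero_iff.1 (by simp [hQ])
    have hlim : Tendsto (fun t : ℝ => NormedSpace.normalize (Q + t • m)) (𝓝[>] 0) (𝓝 Q) := by
      have hcont : ContinuousAt (fun t : ℝ => NormedSpace.normalize (Q + t • m)) 0 :=
        (continuousAt_normalize hQ0).comp_of_eq (f := fun t : ℝ => Q + t • m) (by fun_prop) (by simp)
      simpa [normalize_eq_self_of_norm_eq_one hQ] using hcont.tendsto.mono_left nhdsWithin_le_nhds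
    refine mem_closure_of_tendsto hlim ?_
    filter_upwards [self_mem_nhdsWithin] with t (ht : 0 < t)
    have hpos : 0 < ⟪m, Q + t • m⟫ := by
      rw [inner_add_right, real_inner_smul_right, real_inner_self_eq_norm_sq]
      exact add_pos_of_nonneg_of_pos hmQ (mul_pos ht (pow_pos (norm_pos_iff.2 hm) 2))
    have hne : Q + t • m ≠ 0 := by rintro h; simp [h] at hpos
    exact ⟨mem_sphere_zero_iff_norm.2 (norm_normalize hne), inner_normalize_pos_iff.2 hpos⟩

end Hemisphere

/-- the vanishing set of a plane not through the origin is the great circle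
S² ∩ H₀, where H₀ is the parallel plane through the origin. -/
theorem stmt1 (n : E3) (c : ℝ) (hn : n ≠ 0) (hc : c ≠ 0) :
    closure (proj '' {P : E3 | ⟪n, P⟫ = c}) \ proj '' {P : E3 | ⟪n, P⟫ = c}
      = Metric.sphere (0 : E3) 1 ∩ {P : E3 | ⟪n, P⟫ = 0} := by
  change closure (NormedSpace.normalize '' _) \ NormedSpace.normalize '' _ = _
  rw [normalize_image_setOf_inner_eq hc, closure_sphere_inter_setOf_inner_pos (smul_ne_zero hc hn),
    ← Set.inter_sdiff_distrib_left]
  congr 1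
  ext Q
  simp only [Set.mem_sdiff, Set.mem_ofPred_eq, not_lt, ← le_antisymm_iff, real_inner_smul_left,
    zero_eq_mul, hc, false_or]
end
end

section
/- Let p(x,y,z) = arccos(y/√(x²+y²+z²)) · (x,z)/√(x²+z²). The restriction of p to the unit sphere minus the point B = (0,−1,0) is a bijection onto the open disc {(u,v) ∈ ℝ² : u² + v² < π²} minus the origin, together with the origin being the image of F = (0,1,0); i.e., p restricted to S² \ {B} is a bijection onto the open disc of radius π. -/
/-!
For a point `P = (x, y, z)` of the unit sphere put `θ = arccos y ∈ [0, π]`. The horizontal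
part `(x, z)` then has length `sin θ`, so `p P` is the vector of length `θ` pointing along
`(x, z)`, and `θ < π` exactly when `P ≠ B`. The inverse is the exponential map of the sphere
at `F`, `w ↦ (sin ‖w‖ · w / ‖w‖, cos ‖w‖)` with `w` placed in the `x`- and `z`-slots; on the
open disc of radius `π` it lands in `S² \ {B}` because `cos ‖w‖ > -1` there.
-/

open scoped RealInnerProductSpace

noncomputable section

/-- The total spherical perspective map: p(x,y,z) = arccos(y/‖P‖) · (x,z)/√(x²+z²). -/
def persp (P : E3) : E2 :=
  (Real.arccos (P 1 / ‖P‖) / Real.sqrt ((P 0) ^ 2 + (P 2) ^ 2)) • vec2 (P 0) (P 2)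

/-- The front point F = (0,1,0). -/
def Fpt : E3 := vec3 0 1 0

/-- The back point B = (0,-1,0). -/
def Bpt : E3 := vec3 0 (-1) 0

open Real Metric

@[simp] lemma vec2_apply_zero (a b : ℝ) : vec2 a b 0 = a := rfl
@[simp] lemma vec2_apply_one (a b : ℝ) : vec2 a b 1 = b := rfl
@[simp] lemma vec3_apply_zero (a b c : ℝ) : vec3 a b c 0 = a := rfl
@[simp] lemma vec3_apply_one (a b c : ℝ) : vec3 a b c 1 = b := rfl
@[simp] lemma vec3_apply_two (a b c : ℝ) : vec3 a b c 2 = c := rfl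

lemma E2.norm_sq_eq (w : E2) : ‖w‖ ^ 2 = w 0 ^ 2 + w 1 ^ 2 := by
  rw [EuclideanSpace.real_norm_sq_eq, Fin.sum_univ_two]

lemma E3.norm_sq_eq (P : E3) : ‖P‖ ^ 2 = P 0 ^ 2 + P 1 ^ 2 + P 2 ^ 2 := by
  rw [EuclideanSpace.real_norm_sq_eq, Fin.sum_univ_three]

lemma norm_vec2 (a b : ℝ) : ‖vec2 a b‖ = √(a ^ 2 + b ^ 2) := by
  rw [← sqrt_sq (norm_nonneg _), E2.norm_sq_eq, vec2_apply_zero, vec2_apply_one]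

lemma E3.mem_unit_sphere_iff (P : E3) :
    P ∈ sphere (0 : E3) 1 ↔ P 0 ^ 2 + P 1 ^ 2 + P 2 ^ 2 = 1 := by
  rw [mem_sphere_zero_iff_norm, ← E3.norm_sq_eq,
    pow_eq_one_iff_of_nonneg (norm_nonneg P) two_ne_zero]

lemma div_mul_div_mul_cancel_of_imp {G₀ : Type*} [CommGroupWithZero G₀] {a b x : G₀}
    (ha : a = 0 → x = 0) (hb : b = 0 → x = 0) : a / b * (b / a * x) = x := by
  rcases eq_or_ne a 0 with rfl | ha0
  · simp [ha rfl]
  rcases eq_or_ne b 0 with rfl | hb0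
  · simp [hb rfl]
  rw [← mul_assoc, div_mul_div_cancel₀ hb0, div_self ha0, one_mul]

lemma neg_one_lt_of_mem_sphere_of_ne_Bpt {P : E3} (hP : P ∈ sphere (0 : E3) 1)
    (hB : P ≠ Bpt) : -1 < P 1 := by
  rw [E3.mem_unit_sphere_iff] at hP
  by_contra! h
  refine hB (PiLp.ext fun i => ?_)
  fin_cases i <;> simp [Bpt] <;> nlinarith [sq_nonneg (P 0), sq_nonneg (P 2)]

lemma sqrt_sq_add_sq_eq_sin_arccos {P : E3} (hP : P ∈ sphere (0 : E3) 1) :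
    √(P 0 ^ 2 + P 2 ^ 2) = sin (arccos (P 1)) := by
  rw [E3.mem_unit_sphere_iff] at hP
  rw [sin_arccos]
  congr 1
  linarith

lemma persp_of_mem_sphere {P : E3} (hP : P ∈ sphere (0 : E3) 1) :
    persp P = (arccos (P 1) / sin (arccos (P 1))) • vec2 (P 0) (P 2) := by
  rw [persp, mem_sphere_zero_iff_norm.mp hP, div_one, sqrt_sq_add_sq_eq_sin_arccos hP]

lemma eq_zero_of_sin_eq_zero {θ : ℝ} (h0 : 0 ≤ θ) (hπ : θ < π) (h : sin θ = 0) : θ = 0 :=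
  (sin_eq_zero_iff_of_lt_of_lt (by linarith [pi_pos]) hπ).mp h

lemma norm_persp {P : E3} (hP : P ∈ sphere (0 : E3) 1) (hB : P ≠ Bpt) :
    ‖persp P‖ = arccos (P 1) := by
  set θ := arccos (P 1)
  have hθπ : θ < π := arccos_lt_pi.mpr (neg_one_lt_of_mem_sphere_of_ne_Bpt hP hB)
  have hsin : 0 ≤ sin θ := sin_nonneg_of_nonneg_of_le_pi (arccos_nonneg _) hθπ.le
  rw [persp_of_mem_sphere hP, norm_smul, norm_vec2, sqrt_sq_add_sq_eq_sin_arccos hP,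
    Real.norm_of_nonneg (div_nonneg (arccos_nonneg _) hsin)]
  exact div_mul_cancel_of_imp (eq_zero_of_sin_eq_zero (arccos_nonneg _) hθπ)

lemma mapsTo_persp : Set.MapsTo persp (sphere (0 : E3) 1 \ {Bpt}) (ball (0 : E2) π) := by
  rintro P ⟨hP, hB⟩
  rw [mem_ball_zero_iff, norm_persp hP hB]
  exact arccos_lt_pi.mpr (neg_one_lt_of_mem_sphere_of_ne_Bpt hP hB)

def perspInv (w : E2) : E3 :=
  vec3 (sin ‖w‖ / ‖w‖ * w 0) (cos ‖w‖) (sin ‖w‖ / ‖w‖ * w 1)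

lemma perspInv_mem_sphere (w : E2) : perspInv w ∈ sphere (0 : E3) 1 := by
  have hsin : sin ‖w‖ / ‖w‖ * ‖w‖ = sin ‖w‖ :=
    div_mul_cancel_of_imp fun h => by rw [h, sin_zero]
  have hsq : (sin ‖w‖ / ‖w‖) ^ 2 * (w 0 ^ 2 + w 1 ^ 2) = sin ‖w‖ ^ 2 := by
    rw [← E2.norm_sq_eq, ← mul_pow, hsin]
  rw [E3.mem_unit_sphere_iff, perspInv, vec3_apply_zero, vec3_apply_one, vec3_apply_two]
  linear_combination hsq + sin_sq_add_cos_sq ‖w‖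

lemma perspInv_ne_Bpt {w : E2} (hw : ‖w‖ < π) : perspInv w ≠ Bpt := by
  intro h
  have hcos : cos ‖w‖ = -1 := by simpa [perspInv, Bpt] using congrArg (· 1) h
  have := arccos_cos (norm_nonneg w) hw.le
  rw [hcos, arccos_neg_one] at this
  exact hw.ne this.symm

lemma mapsTo_perspInv : Set.MapsTo perspInv (ball (0 : E2) π) (sphere (0 : E3) 1 \ {Bpt}) :=
  fun _ hw => ⟨perspInv_mem_sphere _, perspInv_ne_Bpt (mem_ball_zero_iff.mp hw)⟩

lemma leftInvOn_perspInv_persp :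
    Set.LeftInvOn perspInv persp (sphere (0 : E3) 1 \ {Bpt}) := by
  rintro P ⟨hP, hB⟩
  set θ := arccos (P 1)
  have hsq := sqrt_sq_add_sq_eq_sin_arccos hP
  have hxz (h : sin θ = 0) : P 0 = 0 ∧ P 2 = 0 := by
    rw [h, sqrt_eq_zero (by positivity)] at hsq
    constructor <;> nlinarith [sq_nonneg (P 0), sq_nonneg (P 2)]
  have hθ (h : θ = 0) : sin θ = 0 := by rw [h, sin_zero]
  have hcos : cos θ = P 1 := by
    have hsum := (E3.mem_unit_sphere_iff P).mp hP
    exact cos_arccos (by linarith [neg_one_lt_of_mem_sphere_of_ne_Bpt hP hB])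
      (by nlinarith [sq_nonneg (P 0), sq_nonneg (P 2)])
  rw [perspInv, norm_persp hP hB, persp_of_mem_sphere hP]
  refine PiLp.ext fun i => ?_
  fin_cases i <;> simp only [PiLp.smul_apply, smul_eq_mul, vec2_apply_zero, vec2_apply_one]
  · exact div_mul_div_mul_cancel_of_imp (fun h => (hxz h).1) (fun h => (hxz (hθ h)).1)
  · exact hcos
  · exact div_mul_div_mul_cancel_of_imp (fun h => (hxz h).2) (fun h => (hxz (hθ h)).2)

lemma rightInvOn_perspInv_persp :
    Set.RightInvOn perspInv persp (ball (0 : E2) π) := by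
  intro w hw
  rw [mem_ball_zero_iff] at hw
  have hr : arccos (perspInv w 1) = ‖w‖ := arccos_cos (norm_nonneg w) hw.le
  have hw0 (h : ‖w‖ = 0) (i : Fin 2) : w i = 0 := by rw [norm_eq_zero.mp h]; rfl
  have hr0 (h : sin ‖w‖ = 0) : ‖w‖ = 0 := eq_zero_of_sin_eq_zero (norm_nonneg w) hw h
  rw [persp_of_mem_sphere (perspInv_mem_sphere w), hr]
  refine PiLp.ext fun i => ?_
  fin_cases i <;> simp only [PiLp.smul_apply, smul_eq_mul, perspInv, vec3_apply_zero,
    vec3_apply_two]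
  · exact div_mul_div_mul_cancel_of_imp (fun h => hw0 h 0) (fun h => hw0 (hr0 h) 0)
  · exact div_mul_div_mul_cancel_of_imp (fun h => hw0 h 1) (fun h => hw0 (hr0 h) 1)

/-- p restricted to S² \ {B} is a bijection onto the open disc of radius π. -/
theorem stmt6 :
    Set.BijOn persp (Metric.sphere (0 : E3) 1 \ {Bpt}) (Metric.ball (0 : E2) Real.pi) :=
  Set.InvOn.bijOn ⟨leftInvOn_perspInv_persp, rightInvOn_perspInv_persp⟩ mapsTo_persp
    mapsTo_perspInv
end
end

section
/- Let p be the total spherical perspective map and let C be a great circle of S² passing through F = (0,1,0) (equivalently, C = S² ∩ H for a plane H through the origin containing the y-axis). Then the image p(C \ {B}) is an open diameter of the perspective disc: it equals {t·u : t ∈ (−π, π)} for a fixed unit vector u ∈ ℝ². -/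
/-!
The measuring line through `F` whose horizontal direction is the unit vector `u` is traced by
`t ↦ (sin t · u₀, cos t, sin t · u₁)`, and `t ∈ (-π, π)` covers every point of it except `B`.
At such a point `arccos y = |t|`, while `(x, z) / √(x² + z²) = sign (sin t) · u = sign t · u`,
so `p` sends the point with parameter `t` to `t · u`.
-/

open scoped RealInnerProductSpace

noncomputable section

open Real

lemma sq_add_sq_of_norm_eq_one {u : E2} (hu : ‖u‖ = 1) : u 0 ^ 2 + u 1 ^ 2 = 1 := by
  have h := EuclideanSpace.norm_eq u
  rw [hu, Fin.sum_univ_two, eq_comm, Real.sqrt_eq_one] at h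
  simpa only [Real.norm_eq_abs, sq_abs] using h

lemma norm_vec3_eq_one_iff (a b c : ℝ) : ‖vec3 a b c‖ = 1 ↔ a ^ 2 + b ^ 2 + c ^ 2 = 1 := by
  rw [EuclideanSpace.norm_eq, Real.sqrt_eq_one]
  simp [vec3, Fin.sum_univ_three, sq_abs, add_assoc]

lemma abs_div_abs_sin_mul_sin {t : ℝ} (ht : |t| < π) : |t| / |sin t| * sin t = t := by
  rcases lt_trichotomy t 0 with h | rfl | h
  · have hsin : sin t < 0 := sin_neg_of_neg_of_neg_pi_lt h (neg_lt_of_abs_lt ht)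
    rw [abs_of_neg h, abs_of_neg hsin, neg_div_neg_eq, div_mul_cancel₀ _ hsin.ne]
  · simp
  · have hsin : 0 < sin t := sin_pos_of_pos_of_lt_pi h (lt_of_abs_lt ht)
    rw [abs_of_pos h, abs_of_pos hsin, div_mul_cancel₀ _ hsin.ne']

lemma arccos_cos_eq_abs {t : ℝ} (ht : |t| ≤ π) : arccos (cos t) = |t| := by
  rw [← cos_abs, arccos_cos (abs_nonneg t) ht]

lemma exists_mem_Ioo_cos_sin {s y : ℝ} (h : s ^ 2 + y ^ 2 = 1) (hy : y ≠ -1) :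
    ∃ t ∈ Set.Ioo (-π) π, cos t = y ∧ sin t = s := by
  set z : ℂ := ⟨y, s⟩
  have hz : ‖z‖ = 1 := by
    rw [Complex.norm_def, Complex.normSq_mk, Real.sqrt_eq_one]; linarith
  have hz0 : z ≠ 0 := norm_ne_zero_iff.mp (hz ▸ one_ne_zero)
  refine ⟨z.arg, ⟨Complex.neg_pi_lt_arg z, ?_⟩, by simp [Complex.cos_arg hz0, hz, z],
    by simp [Complex.sin_arg, hz, z]⟩
  refine (Complex.arg_le_pi z).lt_of_ne fun hπ => hy ?_
  obtain ⟨hre, him⟩ := Complex.arg_eq_pi_iff.mp hπ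
  simp only [z] at hre him
  nlinarith

/-- The point with polar angle `t` from `F` on the measuring line in the direction `u`. -/
def circlePoint (u : E2) (t : ℝ) : E3 := vec3 (sin t * u 0) (cos t) (sin t * u 1)

lemma norm_circlePoint {u : E2} (hu : ‖u‖ = 1) (t : ℝ) : ‖circlePoint u t‖ = 1 := by
  rw [circlePoint, norm_vec3_eq_one_iff]
  linear_combination (sin t ^ 2) * sq_add_sq_of_norm_eq_one hu + sin_sq_add_cos_sq t

lemma persp_circlePoint {u : E2} (hu : ‖u‖ = 1) {t : ℝ} (ht : |t| < π) :
    persp (circlePoint u t) = t • u := by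
  have hsq : (sin t * u 0) ^ 2 + (sin t * u 1) ^ 2 = sin t ^ 2 := by
    linear_combination (sin t ^ 2) * sq_add_sq_of_norm_eq_one hu
  have hvec : vec2 (sin t * u 0) (sin t * u 1) = sin t • u := by
    ext i; fin_cases i <;> rfl
  simp only [persp, norm_circlePoint hu]
  change (arccos (cos t / 1) / √((sin t * u 0) ^ 2 + (sin t * u 1) ^ 2)) •
    vec2 (sin t * u 0) (sin t * u 1) = t • u
  rw [div_one, hsq, sqrt_sq_eq_abs, arccos_cos_eq_abs ht.le, hvec, smul_smul,
    abs_div_abs_sin_mul_sin ht]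

lemma sphere_inter_plane_diff_eq_image {u : E2} (hu : ‖u‖ = 1) :
    (Metric.sphere (0 : E3) 1 ∩ {P : E3 | u 1 * P 0 = u 0 * P 2}) \ {Bpt} =
      circlePoint u '' Set.Ioo (-π) π := by
  have hu2 := sq_add_sq_of_norm_eq_one hu
  ext P
  simp only [Set.mem_sdiff, Set.mem_inter_iff, mem_sphere_zero_iff_norm, Set.mem_ofPred_eq,
    Set.mem_singleton_iff, Set.mem_image]
  constructor
  · rintro ⟨⟨hP, hplane⟩, hB⟩
    -- `s` is the signed distance of `P` from the `y`-axis, measured along `u`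
    set s := u 0 * P 0 + u 1 * P 2
    have hx : s * u 0 = P 0 := by linear_combination (P 0) * hu2 - u 1 * hplane
    have hz : s * u 1 = P 2 := by linear_combination (P 2) * hu2 + u 0 * hplane
    have hPeq : P = vec3 (s * u 0) (P 1) (s * u 1) := by
      ext i; fin_cases i
      exacts [hx.symm, rfl, hz.symm]
    rw [hPeq, norm_vec3_eq_one_iff] at hP
    have hsy : s ^ 2 + P 1 ^ 2 = 1 := by linear_combination hP - s ^ 2 * hu2
    have hy : P 1 ≠ -1 := by
      intro hy
      have hs : s = 0 := by nlinarith
      exact hB (by rw [hPeq, hy, hs]; simp [Bpt])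
    obtain ⟨t, ht, hcos, hsin⟩ := exists_mem_Ioo_cos_sin hsy hy
    exact ⟨t, ht, by rw [hPeq, circlePoint, hcos, hsin]⟩
  · rintro ⟨t, ht, rfl⟩
    refine ⟨⟨norm_circlePoint hu t, by
      change u 1 * (sin t * u 0) = u 0 * (sin t * u 1); ring⟩, fun hB => ?_⟩
    have hcos : cos t = -1 := congrArg (fun P : E3 => P 1) hB
    have := arccos_cos_eq_abs (abs_le.mpr ⟨ht.1.le, ht.2.le⟩)
    rw [hcos, arccos_neg_one] at this
    exact (abs_lt.mpr ht).ne this.symm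

lemma persp_image_sphere_inter_plane_diff {u : E2} (hu : ‖u‖ = 1) :
    persp '' ((Metric.sphere (0 : E3) 1 ∩ {P : E3 | u 1 * P 0 = u 0 * P 2}) \ {Bpt}) =
      {w : E2 | ∃ t ∈ Set.Ioo (-π) π, w = t • u} := by
  rw [sphere_inter_plane_diff_eq_image hu, Set.image_image]
  ext w
  simp only [Set.mem_image, Set.mem_ofPred_eq]
  refine exists_congr fun t => and_congr_right fun ht => ?_
  rw [persp_circlePoint hu (abs_lt.mpr ht), eq_comm]

lemma exists_plane_eq_of_apply_one_eq_zero {n : E3} (hn : n ≠ 0) (hn1 : n 1 = 0) :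
    ∃ u : E2, ‖u‖ = 1 ∧ {P : E3 | ⟪n, P⟫ = 0} = {P : E3 | u 1 * P 0 = u 0 * P 2} := by
  have hpos : 0 < n 0 ^ 2 + n 2 ^ 2 := by
    by_contra! h
    have h0 : n 0 = 0 := by nlinarith
    have h2 : n 2 = 0 := by nlinarith
    exact hn (PiLp.ext fun i => by fin_cases i <;> simpa)
  set r := √(n 0 ^ 2 + n 2 ^ 2)
  have hr : r ≠ 0 := (sqrt_pos.mpr hpos).ne'
  have hr2 : r ^ 2 = n 0 ^ 2 + n 2 ^ 2 := sq_sqrt hpos.le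
  refine ⟨vec2 (-n 2 / r) (n 0 / r), ?_, ?_⟩
  · rw [EuclideanSpace.norm_eq, Real.sqrt_eq_one]
    simp only [vec2, WithLp.equiv_symm_apply, norm_eq_abs, sq_abs, Fin.sum_univ_two,
      Matrix.cons_val_zero, Matrix.cons_val_one, Matrix.cons_val_fin_one]
    field_simp
    linear_combination -hr2
  · ext P
    simp only [Set.mem_ofPred_eq, PiLp.inner_apply, Fin.sum_univ_three, hn1]
    simp only [RCLike.inner_apply, conj_trivial, vec2, WithLp.equiv_symm_apply,
      Matrix.cons_val_zero, Matrix.cons_val_one, Matrix.cons_val_fin_one, mul_zero, add_zero]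
    field_simp
    constructor <;> intro h <;> linarith

/-- a great circle through F (cut by a plane through the origin containing the
y-axis, i.e. with normal n satisfying n 1 = 0), minus B, maps onto an open diameter. -/
theorem stmt12 (n : E3) (hn : n ≠ 0) (hn1 : n 1 = 0) :
    ∃ u : E2, ‖u‖ = 1 ∧
      persp '' ((Metric.sphere (0 : E3) 1 ∩ {P : E3 | ⟪n, P⟫ = 0}) \ {Bpt})
        = {w : E2 | ∃ t ∈ Set.Ioo (-Real.pi) Real.pi, w = t • u} := by
  obtain ⟨u, hu, hplane⟩ := exists_plane_eq_of_apply_one_eq_zero hn hn1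
  exact ⟨u, hu, hplane ▸ persp_image_sphere_inter_plane_diff hu⟩
end
end
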